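/- If I is a disjunctive interpolant for a formula φ and a set pos of positions underneath only ∧ and ∨ connectives, then for every position p in pos, the subformula of φ at p entails I(p). -/
import Mathlib


namespace Stmt0

/-- Formulae of the constraint language, viewed as and/or combinations of
constraints (atoms). Positions "underneath only ∧ and ∨" are exactly the
positions visible in this tree structure; any other connectives are
swallowed inside the atoms.  `tr`/`fls` are the formulas true/false. -/
inductive Fml (Con : Type) : Type
  | atom (c : Con)
  | tr
  | fls
  | and (l r : Fml Con)
  | or (l r : Fml Con)

/-- Positions: paths in the formula tree (`true` = left argument, `false` = right). -/
abbrev Pos := List Bool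

variable {S V Con : Type} (U : S → Type)
  (interp : Con → (s : S) → (V → U s) → Prop) (cfv : Con → Set V)

/-- Evaluation of a formula in a structure `s` under a variable assignment. -/
def evalF : Fml Con → (s : S) → (V → U s) → Prop
  | .atom c, s, α => interp c s α
  | .tr, _, _ => True
  | .fls, _, _ => False
  | .and l r, s, α => evalF l s α ∧ evalF r s α
  | .or l r, s, α => evalF l s α ∨ evalF r s α

/-- Free variables of a formula. -/
def ffv : Fml Con → Set V
  | .atom c => cfv c
  | .tr => ∅
  | .fls => ∅
  | .and l r => ffv l ∪ ffv r
  | .or l r => ffv l ∪ ffv r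

/-- The subformula φ↓p at a position, if the position exists in φ. -/
def subAt : Fml Con → Pos → Option (Fml Con)
  | F, [] => some F
  | .and l r, b :: p => subAt (if b then l else r) p
  | .or l r, b :: p => subAt (if b then l else r) p
  | _, _ :: _ => none

/-- φ[p/ψ]: replace the subformula at position p by ψ. -/
def replaceAt : Fml Con → Pos → Fml Con → Fml Con
  | _, [], ψ => ψ
  | .and l r, b :: p, ψ =>
      if b then .and (replaceAt l p ψ) r else .and l (replaceAt r p ψ)
  | .or l r, b :: p, ψ =>
      if b then .or (replaceAt l p ψ) r else .or l (replaceAt r p ψ)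
  | F, _ :: _, _ => F

/-- Simultaneous (outermost-first) substitution of constraints at a set of
positions given by σ; `cur` is the current path. -/
def msubstAux (σ : Pos → Option Con) : Pos → Fml Con → Fml Con
  | cur, .and l r =>
      match σ cur with
      | some c => .atom c
      | none => .and (msubstAux σ (cur ++ [true]) l) (msubstAux σ (cur ++ [false]) r)
  | cur, .or l r =>
      match σ cur with
      | some c => .atom c
      | none => .or (msubstAux σ (cur ++ [true]) l) (msubstAux σ (cur ++ [false]) r)
  | cur, F =>
      match σ cur with
      | some c => .atom c
      | none => F

def msubst (σ : Pos → Option Con) (F : Fml Con) : Fml Con := msubstAux σ [] F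

/-- p is strictly above q. -/
def strictAbove (p q : Pos) : Prop := p <+: q ∧ p ≠ q

/-- q is a direct pos-child of p: q ∈ pos, p < q, and no r ∈ pos with p < r < q. -/
def dirChild (pos : Set Pos) (p q : Pos) : Prop :=
  q ∈ pos ∧ strictAbove p q ∧ ¬ ∃ r ∈ pos, strictAbove p r ∧ strictAbove r q

/-- q is a topmost position of pos. -/
def topmost (pos : Set Pos) (q : Pos) : Prop :=
  q ∈ pos ∧ ¬ ∃ r ∈ pos, strictAbove r q

open Classical in
/-- Substitution map replacing each direct pos-child q of p by the constraint I(q). -/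
noncomputable def childSub (pos : Set Pos) (I : Pos → Con) (p : Pos) : Pos → Option Con :=
  fun q => if dirChild pos p q then some (I q) else none

open Classical in
/-- Substitution map replacing each topmost position q of pos by I(q). -/
noncomputable def topSub (pos : Set Pos) (I : Pos → Con) : Pos → Option Con :=
  fun q => if topmost pos q then some (I q) else none

/-- Entailment over the class of structures. -/
def Entails (F G : Fml Con) : Prop := ∀ s α, evalF U interp F s α → evalF U interp G s α

/-- Unsatisfiability over the class of structures. -/
def Unsat (F : Fml Con) : Prop := ∀ s α, ¬ evalF U interp F s α

/-- Disjunctive interpolant for φ and pos (Definition 2 of the paper). -/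
def DisjInterpolant (φ : Fml Con) (pos : Set Pos) (I : Pos → Con) : Prop :=
  -- (1) for each p ∈ pos, (φ[q₁/I(q₁),…,qₙ/I(qₙ)])↓p ⊨ I(p), the qᵢ the direct pos-children
  (∀ p ∈ pos, ∀ G, subAt (msubst (childSub pos I p) φ) p = some G →
      Entails U interp G (.atom (I p))) ∧
  -- (2) for the topmost positions, φ[q₁/I(q₁),…,qₙ/I(qₙ)] ⊨ false
  Unsat U interp (msubst (topSub pos I) φ) ∧
  -- (3) fv(I(p)) ⊆ fv(φ↓p) ∩ fv(φ[p/true])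
  (∀ p ∈ pos, ∀ G, subAt φ p = some G →
      cfv (I p) ⊆ ffv cfv G ∩ ffv cfv (replaceAt φ p .tr))

/-- Composition of subAt. -/
lemma subAt_append : ∀ (p q : Pos) (F G : Fml Con), subAt F p = some G →
    subAt F (p ++ q) = subAt G q := by
  intro p
  induction p with
  | nil => intro q F G h; simp [subAt] at h; subst h; rfl
  | cons b p ih =>
    intro q F G h
    cases F with
    | and l r => exact ih q _ G h
    | or l r => exact ih q _ G h
    | atom c => simp [subAt] at h
    | tr => simp [subAt] at h
    | fls => simp [subAt] at h

/-- Size bound for subformulae. -/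
lemma subAt_size_le : ∀ (p : Pos) (F G : Fml Con), subAt F p = some G →
    sizeOf G ≤ sizeOf F := by
  intro p
  induction p with
  | nil => intro F G h; simp [subAt] at h; subst h; exact le_refl _
  | cons b p ih =>
    intro F G h
    cases F with
    | and l r =>
      have := ih _ G h
      cases b <;> simp_all <;> omega
    | or l r =>
      have := ih _ G h
      cases b <;> simp_all <;> omega
    | atom c => simp [subAt] at h
    | tr => simp [subAt] at h
    | fls => simp [subAt] at h

lemma subAt_size_lt : ∀ (b : Bool) (p : Pos) (F G : Fml Con),
    subAt F (b :: p) = some G → sizeOf G < sizeOf F := by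
  intro b p F G h
  cases F with
  | and l r =>
    have := subAt_size_le p _ G h
    cases b <;> simp_all <;> omega
  | or l r =>
    have := subAt_size_le p _ G h
    cases b <;> simp_all <;> omega
  | atom c => simp [subAt] at h
  | tr => simp [subAt] at h
  | fls => simp [subAt] at h

lemma msubstAux_of_some {σ : Pos → Option Con} {cur : Pos} {c : Con}
    (h : σ cur = some c) (F : Fml Con) : msubstAux σ cur F = .atom c := by
  cases F <;> simp [msubstAux, h]

/-- Lemma A: subAt of msubst when σ is none on all proper prefixes of p. -/
lemma subAt_msubstAux : ∀ (p : Pos) (F G : Fml Con) (σ : Pos → Option Con) (cur : Pos),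
    subAt F p = some G →
    (∀ q : Pos, q <+: p → q ≠ p → σ (cur ++ q) = none) →
    subAt (msubstAux σ cur F) p = some (msubstAux σ (cur ++ p) G) := by
  intro p
  induction p with
  | nil =>
    intro F G σ cur h _
    simp [subAt] at h; subst h; simp [subAt]
  | cons b p ih =>
    intro F G σ cur h hnone
    have hcur : σ cur = none := by
      have := hnone [] List.nil_prefix (by simp)
      simpa using this
    cases F with
    | and l r =>
      have hrec : ∀ q : Pos, q <+: p → q ≠ p → σ ((cur ++ [b]) ++ q) = none := by
        intro q hq hne
        have : (cur ++ [b]) ++ q = cur ++ (b :: q) := by simp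
        rw [this]
        exact hnone (b :: q) (by simpa using hq) (by simp [hne])
      have := ih (if b then l else r) G σ (cur ++ [b]) h hrec
      simp only [msubstAux, hcur]
      cases b <;> simpa [subAt] using this
    | or l r =>
      have hrec : ∀ q : Pos, q <+: p → q ≠ p → σ ((cur ++ [b]) ++ q) = none := by
        intro q hq hne
        have : (cur ++ [b]) ++ q = cur ++ (b :: q) := by simp
        rw [this]
        exact hnone (b :: q) (by simpa using hq) (by simp [hne])
      have := ih (if b then l else r) G σ (cur ++ [b]) h hrec
      simp only [msubstAux, hcur]
      cases b <;> simpa [subAt] using this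
    | atom c => simp [subAt] at h
    | tr => simp [subAt] at h
    | fls => simp [subAt] at h

/-- Lemma B: monotonicity of msubstAux w.r.t. evaluation, assuming each
substituted position is entailed at its subformula. -/
lemma evalF_msubstAux (s : S) (α : V → U s) :
    ∀ (G : Fml Con) (σ : Pos → Option Con) (cur : Pos),
    (∀ (q : Pos) (c : Con) (G' : Fml Con), σ (cur ++ q) = some c →
      subAt G q = some G' → evalF U interp G' s α → interp c s α) →
    evalF U interp G s α → evalF U interp (msubstAux σ cur G) s α := by
  intro G
  induction G with
  | atom c =>
    intro σ cur h hev
    cases hσ : σ cur with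
    | none => simpa [msubstAux, hσ] using hev
    | some c' =>
      rw [msubstAux_of_some hσ]
      exact h [] c' _ (by simpa using hσ) rfl hev
  | tr =>
    intro σ cur h hev
    cases hσ : σ cur with
    | none => simpa [msubstAux, hσ] using hev
    | some c' =>
      rw [msubstAux_of_some hσ]
      exact h [] c' _ (by simpa using hσ) rfl hev
  | fls => intro σ cur h hev; exact absurd hev (by simp [evalF])
  | and l r ihl ihr =>
    intro σ cur h hev
    cases hσ : σ cur with
    | some c' =>
      rw [msubstAux_of_some hσ]
      exact h [] c' _ (by simpa using hσ) rfl hev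
    | none =>
      simp only [msubstAux, hσ]
      obtain ⟨hl, hr⟩ := hev
      constructor
      · exact ihl σ (cur ++ [true]) (fun q c G' hs hsub =>
          h (true :: q) c G' (by simpa using hs) (by simpa [subAt] using hsub)) hl
      · exact ihr σ (cur ++ [false]) (fun q c G' hs hsub =>
          h (false :: q) c G' (by simpa using hs) (by simpa [subAt] using hsub)) hr
  | or l r ihl ihr =>
    intro σ cur h hev
    cases hσ : σ cur with
    | some c' =>
      rw [msubstAux_of_some hσ]
      exact h [] c' _ (by simpa using hσ) rfl hev
    | none =>
      simp only [msubstAux, hσ]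
      cases hev with
      | inl hl =>
        exact Or.inl (ihl σ (cur ++ [true]) (fun q c G' hs hsub =>
          h (true :: q) c G' (by simpa using hs) (by simpa [subAt] using hsub)) hl)
      | inr hr =>
        exact Or.inr (ihr σ (cur ++ [false]) (fun q c G' hs hsub =>
          h (false :: q) c G' (by simpa using hs) (by simpa [subAt] using hsub)) hr)

/-- if I is a disjunctive interpolant for φ and pos (positions
only underneath ∧ and ∨), then for every p ∈ pos, φ↓p ⊨ I(p). -/
theorem stmt0 (φ : Fml Con) (pos : Set Pos)
    (hvalid : ∀ p ∈ pos, (subAt φ p).isSome)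
    (I : Pos → Con) (hI : DisjInterpolant U interp cfv φ pos I) :
    ∀ p ∈ pos, ∀ G, subAt φ p = some G → Entails U interp G (.atom (I p)) := by
  have main : ∀ n (p : Pos), p ∈ pos → ∀ G, subAt φ p = some G → sizeOf G ≤ n →
      Entails U interp G (.atom (I p)) := by
    intro n
    induction n using Nat.strong_induction_on with
    | _ n ih =>
      intro p hp G hG hsize
      have hnone : ∀ q : Pos, q <+: p → q ≠ p → childSub pos I p ([] ++ q) = none := by
        intro q hq hne
        simp only [List.nil_append, childSub]
        rw [if_neg]
        rintro ⟨_, ⟨hpre, hne'⟩, _⟩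
        exact hne' (_root_.antisymm hpre hq)
      have hsub := subAt_msubstAux p φ G (childSub pos I p) [] hG hnone
      have hent := hI.1 p hp _ hsub
      intro s α hev
      apply hent s α
      apply evalF_msubstAux U interp s α G (childSub pos I p) ([] ++ p) _ hev
      intro q c G' hσ hsubq hev'
      simp only [List.nil_append, ← List.append_assoc] at hσ
      unfold childSub at hσ
      split at hσ
      case isTrue hdc =>
        obtain ⟨hmem, ⟨_, hne⟩, _⟩ := hdc
        cases hσ
        cases q with
        | nil => exact absurd (by simp) hne
        | cons b q' =>
          have hsubφ : subAt φ (p ++ (b :: q')) = some G' := by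
            rw [subAt_append p (b :: q') φ G hG]; exact hsubq
          have hlt : sizeOf G' < sizeOf G := subAt_size_lt b q' G G' hsubq
          exact ih (sizeOf G') (lt_of_lt_of_le hlt hsize) (p ++ (b :: q')) hmem G'
            hsubφ (le_refl _) s α hev'
      case isFalse => exact absurd hσ (by simp)
  intro p hp G hG
  exact main (sizeOf G) p hp G hG (le_refl _)

end Stmt0
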